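/- Let Γ_m(x) = π^{m(m−1)/4}·∏_{j=1}^m Γ(x − (j−1)/2), for x > (m−1)/2, denote the multivariate gamma function. Assume k = k_N = o(N) and m = m_N = o(N). Then log(Γ_m(N/2)/Γ_m((N−k)/2)) − (m·k/2)·log(N/2) = O(m·k·(m+k)/N); that is, there exist a constant C > 0 and N₀ such that for all N ≥ N₀, |log Γ_m(N/2) − log Γ_m((N−k)/2) − (m·k/2)·log(N/2)| ≤ C·m·k·(m+k)/N. -/
import Mathlib


open Filter Asymptotics

/-- The multivariate gamma function `Γ_m(x) = π^{m(m-1)/4} ∏_{j=1}^m Γ(x - (j-1)/2)`. -/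
noncomputable def mvGamma (m : ℕ) (x : ℝ) : ℝ :=
  Real.pi ^ ((m : ℝ) * ((m : ℝ) - 1) / 4) *
    ∏ j ∈ Finset.range m, Real.Gamma (x - (j : ℝ) / 2)


lemma lg_bounds {x δ : ℝ} (hx : 2 ≤ x) (hδ : 0 < δ) :
    δ * Real.log (x - 1) ≤ Real.log (Real.Gamma (x + δ)) - Real.log (Real.Gamma x) ∧
    Real.log (Real.Gamma (x + δ)) - Real.log (Real.Gamma x) ≤ δ * Real.log (x + δ) := by
  have hconv := Real.convexOn_log_Gamma
  have step : ∀ y : ℝ, 0 < y →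
      Real.log (Real.Gamma (y + 1)) - Real.log (Real.Gamma y) = Real.log y := by
    intro y hy
    rw [Real.Gamma_add_one hy.ne', Real.log_mul hy.ne' (Real.Gamma_pos_of_pos hy).ne']
    ring
  constructor
  · have h := hconv.slope_mono_adjacent (x := x - 1) (y := x) (z := x + δ)
      (Set.mem_Ioi.mpr (by linarith)) (Set.mem_Ioi.mpr (by linarith))
      (by linarith) (by linarith)
    simp only [Function.comp] at h
    have h1 := step (x - 1) (by linarith)
    rw [show x - 1 + 1 = x by ring] at h1
    rw [show x - (x - 1) = 1 by ring, show x + δ - x = δ by ring, div_one, h1] at h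
    calc δ * Real.log (x - 1) ≤ δ * ((Real.log (Real.Gamma (x + δ)) - Real.log (Real.Gamma x)) / δ) := by
          exact mul_le_mul_of_nonneg_left h hδ.le
      _ = Real.log (Real.Gamma (x + δ)) - Real.log (Real.Gamma x) := by field_simp
  · have h := hconv.slope_mono_adjacent (x := x) (y := x + δ) (z := x + δ + 1)
      (Set.mem_Ioi.mpr (by linarith)) (Set.mem_Ioi.mpr (by linarith))
      (by linarith) (by linarith)
    simp only [Function.comp] at h
    have h1 := step (x + δ) (by linarith)
    rw [show x + δ - x = δ by ring, show x + δ + 1 - (x + δ) = 1 by ring, div_one, h1] at h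
    calc Real.log (Real.Gamma (x + δ)) - Real.log (Real.Gamma x)
        = δ * ((Real.log (Real.Gamma (x + δ)) - Real.log (Real.Gamma x)) / δ) := by field_simp
      _ ≤ δ * Real.log (x + δ) := mul_le_mul_of_nonneg_left h hδ.le

lemma term_bound {N a b : ℝ} (hN : 16 ≤ N) (ha : 1 ≤ a) (hb : 0 ≤ b) (hab : a + b ≤ N / 4) :
    |Real.log (Real.Gamma ((N - b) / 2)) - Real.log (Real.Gamma ((N - a - b) / 2))
      - a / 2 * Real.log (N / 2)| ≤ 2 * a * (a + b + 2) / N := by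
  set x := (N - a - b) / 2 with hxdef
  set δ := a / 2 with hδdef
  have hx2 : 2 ≤ x := by rw [hxdef]; linarith
  have hδ0 : 0 < δ := by rw [hδdef]; linarith
  have hxδ : x + δ = (N - b) / 2 := by rw [hxdef, hδdef]; ring
  obtain ⟨hlo, hhi⟩ := lg_bounds hx2 hδ0
  rw [← hxδ]
  have hN0 : (0 : ℝ) < N := by linarith
  -- log(N/2) - log(x-1) ≤ 2(a+b+2)/N
  have hx1 : (0 : ℝ) < x - 1 := by linarith
  have hkey : Real.log (N / 2) - Real.log (x - 1) ≤ 2 * (a + b + 2) / N := by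
    rw [← Real.log_div (by linarith) hx1.ne']
    have hpos : 0 < N / 2 / (x - 1) := by positivity
    have h1 := Real.log_le_sub_one_of_pos hpos
    have h2 : N / 2 / (x - 1) - 1 ≤ 2 * (a + b + 2) / N := by
      rw [div_sub_one hx1.ne', div_le_div_iff₀ hx1 hN0]
      rw [hxdef]
      nlinarith
    linarith
  have hmono : Real.log (x + δ) ≤ Real.log (N / 2) := by
    apply Real.log_le_log (by linarith)
    rw [hxdef, hδdef]; linarith
  rw [abs_le]
  constructor
  · have : δ * (Real.log (N / 2) - Real.log (x - 1)) ≤ δ * (2 * (a + b + 2) / N) :=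
      mul_le_mul_of_nonneg_left hkey hδ0.le
    have hd : δ * (2 * (a + b + 2) / N) ≤ 2 * a * (a + b + 2) / N := by
      rw [hδdef, show a / 2 * (2 * (a + b + 2) / N) = a * (a + b + 2) / N from by ring,
        div_le_div_iff₀ hN0 hN0]
      nlinarith [mul_nonneg (mul_nonneg (by linarith : (0:ℝ) ≤ a)
        (by linarith : (0:ℝ) ≤ a + b + 2)) hN0.le]
    nlinarith [hlo]
  · have : δ * Real.log (x + δ) ≤ δ * Real.log (N / 2) :=
      mul_le_mul_of_nonneg_left hmono hδ0.le
    have hrhs : (0:ℝ) ≤ 2 * a * (a + b + 2) / N := by positivity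
    rw [hδdef] at this
    nlinarith [hhi]

lemma mv_log (m : ℕ) (x : ℝ) (hx : ∀ j ∈ Finset.range m, 0 < x - (j : ℝ) / 2) :
    Real.log (mvGamma m x) = ((m : ℝ) * ((m : ℝ) - 1) / 4) * Real.log Real.pi +
      ∑ j ∈ Finset.range m, Real.log (Real.Gamma (x - (j : ℝ) / 2)) := by
  unfold mvGamma
  rw [Real.log_mul, Real.log_rpow Real.pi_pos, Real.log_prod]
  · intro j hj
    exact (Real.Gamma_pos_of_pos (hx j hj)).ne'
  · exact (Real.rpow_pos_of_pos Real.pi_pos _).ne'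
  · rw [Finset.prod_ne_zero_iff]
    intro j hj
    exact (Real.Gamma_pos_of_pos (hx j hj)).ne'

/-- **Gamma quotient estimate**: if `k_N = o(N)` and `m_N = o(N)`, then
`log(Γ_m(N/2)/Γ_m((N-k)/2)) - (mk/2)·log(N/2) = O(mk(m+k)/N)`. -/
theorem stmt_6
    (m k : ℕ → ℕ)
    (hk : (fun N => (k N : ℝ)) =o[atTop] fun N => (N : ℝ))
    (hm : (fun N => (m N : ℝ)) =o[atTop] fun N => (N : ℝ)) :
    ∃ C > (0 : ℝ), ∃ N₀ : ℕ, ∀ N ≥ N₀,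
      |Real.log (mvGamma (m N) ((N : ℝ) / 2)) -
          Real.log (mvGamma (m N) (((N : ℝ) - k N) / 2)) -
          ((m N : ℝ) * k N / 2) * Real.log ((N : ℝ) / 2)| ≤
        C * ((m N : ℝ) * k N * ((m N : ℝ) + k N)) / N := by
  have h1 := hk.def (by norm_num : (0:ℝ) < 1/8)
  have h2 := hm.def (by norm_num : (0:ℝ) < 1/8)
  have h3 : ∀ᶠ N : ℕ in atTop, 16 ≤ N := eventually_ge_atTop 16
  obtain ⟨N₀, hN₀⟩ := eventually_atTop.mp ((h1.and h2).and h3)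
  refine ⟨4, by norm_num, N₀, fun N hN => ?_⟩
  obtain ⟨⟨hk8, hm8⟩, h16⟩ := hN₀ N hN
  have hN16 : (16 : ℝ) ≤ N := by exact_mod_cast h16
  have hN0 : (0 : ℝ) < N := by linarith
  have hkN : (k N : ℝ) ≤ N / 8 := by
    rw [Real.norm_eq_abs, Real.norm_eq_abs, abs_of_nonneg (Nat.cast_nonneg _),
      abs_of_nonneg (Nat.cast_nonneg _)] at hk8
    linarith
  have hmN : (m N : ℝ) ≤ N / 8 := by
    rw [Real.norm_eq_abs, Real.norm_eq_abs, abs_of_nonneg (Nat.cast_nonneg _),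
      abs_of_nonneg (Nat.cast_nonneg _)] at hm8
    linarith
  rcases Nat.eq_zero_or_pos (k N) with hk0 | hk1
  · rw [hk0]
    norm_num
  · have hk1' : (1 : ℝ) ≤ k N := by exact_mod_cast hk1
    have hpos1 : ∀ j ∈ Finset.range (m N), 0 < (N : ℝ) / 2 - (j : ℝ) / 2 := by
      intro j hj
      have hj' : (j : ℝ) < m N := by exact_mod_cast Finset.mem_range.mp hj
      linarith
    have hpos2 : ∀ j ∈ Finset.range (m N), 0 < ((N : ℝ) - k N) / 2 - (j : ℝ) / 2 := by
      intro j hj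
      have hj' : (j : ℝ) < m N := by exact_mod_cast Finset.mem_range.mp hj
      linarith
    rw [mv_log _ _ hpos1, mv_log _ _ hpos2]
    have hcollect :
        ((m N : ℝ) * ((m N : ℝ) - 1) / 4) * Real.log Real.pi +
            ∑ j ∈ Finset.range (m N), Real.log (Real.Gamma ((N : ℝ) / 2 - (j : ℝ) / 2)) -
          (((m N : ℝ) * ((m N : ℝ) - 1) / 4) * Real.log Real.pi +
            ∑ j ∈ Finset.range (m N),
              Real.log (Real.Gamma (((N : ℝ) - k N) / 2 - (j : ℝ) / 2))) -
          ((m N : ℝ) * k N / 2) * Real.log ((N : ℝ) / 2) =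
        ∑ j ∈ Finset.range (m N),
          (Real.log (Real.Gamma ((N : ℝ) / 2 - (j : ℝ) / 2)) -
            Real.log (Real.Gamma (((N : ℝ) - k N) / 2 - (j : ℝ) / 2)) -
            (k N : ℝ) / 2 * Real.log ((N : ℝ) / 2)) := by
      rw [Finset.sum_sub_distrib, Finset.sum_sub_distrib, Finset.sum_const,
        Finset.card_range, nsmul_eq_mul]
      ring
    rw [hcollect]
    have key : ∀ j ∈ Finset.range (m N),
        |Real.log (Real.Gamma ((N : ℝ) / 2 - (j : ℝ) / 2)) -
            Real.log (Real.Gamma (((N : ℝ) - k N) / 2 - (j : ℝ) / 2)) -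
            (k N : ℝ) / 2 * Real.log ((N : ℝ) / 2)| ≤
          4 * (k N : ℝ) * ((k N : ℝ) + m N) / N := by
      intro j hj
      have hj' : (j : ℝ) + 1 ≤ m N := by
        have := Finset.mem_range.mp hj
        exact_mod_cast this
      have e1 : (N : ℝ) / 2 - (j : ℝ) / 2 = ((N : ℝ) - j) / 2 := by ring
      have e2 : ((N : ℝ) - k N) / 2 - (j : ℝ) / 2 = ((N : ℝ) - (k N : ℝ) - j) / 2 := by ring
      rw [e1, e2]
      have hb := term_bound (N := N) (a := (k N : ℝ)) (b := (j : ℝ)) hN16 hk1'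
        (Nat.cast_nonneg j) (by linarith)
      refine hb.trans ?_
      rw [div_le_div_iff₀ hN0 hN0]
      nlinarith [mul_nonneg (mul_nonneg (by positivity : (0:ℝ) ≤ 2 * (k N : ℝ))
        (by linarith : (0:ℝ) ≤ (k N : ℝ) + 2 * (m N : ℝ) - j - 2)) hN0.le]
    refine (Finset.abs_sum_le_sum_abs _ _).trans ?_
    refine (Finset.sum_le_sum key).trans ?_
    rw [Finset.sum_const, Finset.card_range, nsmul_eq_mul]
    apply le_of_eq
    ring
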